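/- Let B be a weak Hopf *-algebra with dual WHA B̂, and let B̂_t, B̂_s be the counital subalgebras of B̂. For b ∈ B, define b ⟵ φ := ⟨φ, b₍₁₎⟩ b₍₂₎ for φ ∈ B̂. Then the following are equivalent: (i) b ⟵ φ = b·(1 ⟵ φ) for every φ in the subalgebra B̂_t B̂_s of B̂; (ii) b commutes with every element of B_t. (In other words, the quotient type coideal corresponding to the surjection of B onto the dual of the minimal WHA B̂_t B̂_s is exactly the commutant of B_t in B, and it is the greatest quotient type coideal.) -/

import Mathlib

open scoped TensorProduct
open TensorProduct

noncomputable section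

/-- The conjugate-linear "star" operation on a tensor product of two star modules,
defined via a choice of bases so that `star (x ⊗ y) = star x ⊗ star y`. -/
def tensorStar (M N : Type) [AddCommGroup M] [Module ℂ M] [Module.Finite ℂ M]
    [Module.Free ℂ M] [StarAddMonoid M] [AddCommGroup N] [Module ℂ N] [Module.Finite ℂ N]
    [Module.Free ℂ N] [StarAddMonoid N] (t : M ⊗[ℂ] N) : M ⊗[ℂ] N :=
  let bM := Module.Free.chooseBasis ℂ M
  let bN := Module.Free.chooseBasis ℂ N
  ∑ p : Module.Free.ChooseBasisIndex ℂ M × Module.Free.ChooseBasisIndex ℂ N,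
    (starRingEnd ℂ) (((bM.tensorProduct bN).repr t) p) • (star (bM p.1) ⊗ₜ[ℂ] star (bN p.2))

/-- A weak Hopf `*`-algebra structure on a finite-dimensional `C*`-algebra `B`. -/
structure WHA (B : Type) [NormedRing B] [StarRing B] [CStarRing B] [NormedAlgebra ℂ B]
    [StarModule ℂ B] [FiniteDimensional ℂ B] where
  Δ : B →ₗ[ℂ] B ⊗[ℂ] B
  ε : B →ₗ[ℂ] ℂ
  S : B →ₗ[ℂ] B
  coassoc : ∀ b : B, (TensorProduct.assoc ℂ B B B) ((TensorProduct.map Δ LinearMap.id) (Δ b)) =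
    (TensorProduct.map LinearMap.id Δ) (Δ b)
  counit_left : ∀ b : B, (TensorProduct.lid ℂ B) ((TensorProduct.map ε LinearMap.id) (Δ b)) = b
  counit_right : ∀ b : B, (TensorProduct.rid ℂ B) ((TensorProduct.map LinearMap.id ε) (Δ b)) = b
  comul_mul : ∀ a b : B, Δ (a * b) = Δ a * Δ b
  weak_counit : ∀ b c d : B, (TensorProduct.lid ℂ ℂ)
      ((TensorProduct.map (ε ∘ₗ LinearMap.mulLeft ℂ b) (ε ∘ₗ LinearMap.mulRight ℂ d)) (Δ c)) =
    ε (b * c * d)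
  weak_comul_one : (TensorProduct.map Δ LinearMap.id) (Δ 1) =
    (Δ 1 ⊗ₜ[ℂ] (1 : B)) * ((TensorProduct.assoc ℂ B B B).symm ((1 : B) ⊗ₜ[ℂ] Δ 1))
  comul_star : ∀ b : B, Δ (star b) = tensorStar B B (Δ b)
  antipode_mul : ∀ a b : B, S (a * b) = S b * S a
  antipode_one : S 1 = 1
  antipode_comul : ∀ b : B, Δ (S b) =
    (TensorProduct.map S S) ((TensorProduct.comm ℂ B B) (Δ b))
  counit_antipode : ∀ b : B, ε (S b) = ε b
  antipode_left : ∀ b : B, LinearMap.mul' ℂ B ((TensorProduct.map LinearMap.id S) (Δ b)) =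
    (TensorProduct.lid ℂ B) ((TensorProduct.map ε LinearMap.id) (Δ 1 * (b ⊗ₜ[ℂ] (1 : B))))
  antipode_right : ∀ b : B, LinearMap.mul' ℂ B ((TensorProduct.map S LinearMap.id) (Δ b)) =
    (TensorProduct.rid ℂ B) ((TensorProduct.map LinearMap.id ε) (((1 : B) ⊗ₜ[ℂ] b) * Δ 1))

namespace WHA

variable {B : Type} [NormedRing B] [StarRing B] [CStarRing B] [NormedAlgebra ℂ B]
  [StarModule ℂ B] [FiniteDimensional ℂ B]

/-- The target counital map `ε_t(b) = (ε ⊗ id)(Δ(1)(b ⊗ 1))`. -/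
def εt (W : WHA B) (b : B) : B :=
  (TensorProduct.lid ℂ B) ((TensorProduct.map W.ε LinearMap.id) (W.Δ 1 * (b ⊗ₜ[ℂ] (1 : B))))

/-- The source counital map `ε_s(b) = (id ⊗ ε)((1 ⊗ b)Δ(1))`. -/
def εs (W : WHA B) (b : B) : B :=
  (TensorProduct.rid ℂ B) ((TensorProduct.map LinearMap.id W.ε) (((1 : B) ⊗ₜ[ℂ] b) * W.Δ 1))

/-- The target counital subalgebra `B_t = ε_t(B)`. -/
def Bt (W : WHA B) : Submodule ℂ B := Submodule.span ℂ (Set.range W.εt)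

/-- The source counital subalgebra `B_s = ε_s(B)`. -/
def Bs (W : WHA B) : Submodule ℂ B := Submodule.span ℂ (Set.range W.εs)

/-- The right adjoint action `b ◁ x = S(x₍₁₎) b x₍₂₎`. -/
def ad (W : WHA B) (b x : B) : B :=
  LinearMap.mul' ℂ B ((TensorProduct.map W.S (LinearMap.mulLeft ℂ b)) (W.Δ x))

/-- `I` is a (right) coideal of `B`: a unital `*`-subalgebra with `Δ(I) ⊆ I ⊗ B`. -/
def IsCoideal (W : WHA B) (I : Submodule ℂ B) : Prop :=
  (1 : B) ∈ I ∧ (∀ a ∈ I, ∀ b ∈ I, a * b ∈ I) ∧ (∀ a ∈ I, star a ∈ I) ∧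
    ∀ a ∈ I, W.Δ a ∈ Submodule.span ℂ {x : B ⊗[ℂ] B | ∃ u ∈ I, ∃ v : B, x = u ⊗ₜ[ℂ] v}

/-- A coideal is invariant if `span{ b ◁ x : b ∈ I, x ∈ B } = I`. -/
def IsInvariant (W : WHA B) (I : Submodule ℂ B) : Prop :=
  Submodule.span ℂ {y : B | ∃ b ∈ I, ∃ x : B, y = W.ad b x} = I

end WHA

/-- A morphism of weak Hopf `*`-algebras. -/
structure WHAHom {B C : Type} [NormedRing B] [StarRing B] [CStarRing B] [NormedAlgebra ℂ B]
    [StarModule ℂ B] [FiniteDimensional ℂ B] [NormedRing C] [StarRing C] [CStarRing C]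
    [NormedAlgebra ℂ C] [StarModule ℂ C] [FiniteDimensional ℂ C]
    (W : WHA B) (W' : WHA C) where
  π : B →⋆ₐ[ℂ] C
  comul_comp : ∀ b : B, W'.Δ (π b) = (TensorProduct.map π.toLinearMap π.toLinearMap) (W.Δ b)
  antipode_comp : ∀ b : B, W'.S (π b) = π (W.S b)
  counit_comp : ∀ b : B, W'.ε (π b) = W.ε b


namespace WHA

variable {B : Type} [NormedRing B] [StarRing B] [CStarRing B] [NormedAlgebra ℂ B]
  [StarModule ℂ B] [FiniteDimensional ℂ B]

/-- The coproduct of the dual WHA `B̂`, dual to the multiplication of `B`. -/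
def comulHat (W : WHA B) (φ : Module.Dual ℂ B) :
    Module.Dual ℂ B ⊗[ℂ] Module.Dual ℂ B :=
  (TensorProduct.dualDistribEquiv ℂ B B).symm ((LinearMap.mul' ℂ B).dualMap φ)

/-- The (convolution) multiplication of the dual WHA `B̂`: `⟨φψ, b⟩ = ⟨φ ⊗ ψ, Δ(b)⟩`. -/
def mulHat (W : WHA B) :
    Module.Dual ℂ B →ₗ[ℂ] Module.Dual ℂ B →ₗ[ℂ] Module.Dual ℂ B :=
  (TensorProduct.mapBilinear (RingHom.id ℂ) B B ℂ ℂ).compr₂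
    ((LinearMap.lcomp ℂ ℂ W.Δ) ∘ₗ
      (LinearMap.llcomp ℂ (B ⊗[ℂ] B) (ℂ ⊗[ℂ] ℂ) ℂ (TensorProduct.lid ℂ ℂ).toLinearMap))

/-- The counit of the dual WHA `B̂`: evaluation at `1`. -/
def counitHat : Module.Dual ℂ B →ₗ[ℂ] ℂ := LinearMap.applyₗ (R := ℂ) (1 : B)

/-- The target counital map of the dual WHA: `ε̂_t(φ) = (ε̂ ⊗ id)(Δ̂(1̂)(φ ⊗ 1̂))`,
where `1̂ = ε` is the unit of `B̂`. -/
def εtHat (W : WHA B) (φ : Module.Dual ℂ B) : Module.Dual ℂ B :=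
  (TensorProduct.lid ℂ (Module.Dual ℂ B))
    ((TensorProduct.map counitHat LinearMap.id)
      ((TensorProduct.map (W.mulHat.flip φ) (W.mulHat.flip W.ε)) (W.comulHat W.ε)))

/-- The source counital map of the dual WHA: `ε̂_s(φ) = (id ⊗ ε̂)((1̂ ⊗ φ)Δ̂(1̂))`. -/
def εsHat (W : WHA B) (φ : Module.Dual ℂ B) : Module.Dual ℂ B :=
  (TensorProduct.rid ℂ (Module.Dual ℂ B))
    ((TensorProduct.map LinearMap.id counitHat)
      ((TensorProduct.map (W.mulHat W.ε) (W.mulHat φ)) (W.comulHat W.ε)))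

/-- The subalgebra `B̂_t B̂_s` of `B̂` (the minimal WHA inside `B̂`), as the linear span of
products of elements of `B̂_t = ε̂_t(B̂)` and `B̂_s = ε̂_s(B̂)`. -/
def minHat (W : WHA B) : Submodule ℂ (Module.Dual ℂ B) :=
  Submodule.span ℂ
    {φ : Module.Dual ℂ B | ∃ u ∈ Submodule.span ℂ (Set.range W.εtHat),
      ∃ v ∈ Submodule.span ℂ (Set.range W.εsHat), φ = W.mulHat u v}

/-- The right Sweedler arrow `b ⟵ φ = ⟨φ, b₍₁₎⟩ b₍₂₎`. -/
def arrL (W : WHA B) (b : B) (φ : Module.Dual ℂ B) : B :=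
  (TensorProduct.lid ℂ B) ((TensorProduct.map φ LinearMap.id) (W.Δ b))

end WHA


/-!
Elements of `B̂_t` and `B̂_s` are `χ ∘ ε_t` and `ψ ∘ ε_s`. Since `(ε_s ⊗ id) Δ(x) = (1 ⊗ x) Δ(1)`,
we have `x ⟵ (ψ ∘ ε_s) = x (1 ⟵ ψ)`, and as `⟵` is a right action of `B̂` the condition on
`B̂_t B̂_s` reduces to `b ⟵ (χ ∘ ε_t) = b (1 ⟵ (χ ∘ ε_t))` for all `χ`.

Conjugating by `*` turns `ε_t` into `ε'_t(y) = ε(y 1₍₁₎) 1₍₂₎`, and `ε'_t ∘ ε_s = ε'_t` gives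
`c ⟵ (χ ∘ ε'_t) = c (1 ⟵ (χ ∘ ε'_t))` for every `c`. So the condition says that `b*` commutes with
all `1 ⟵ (χ ∘ ε'_t)`. These elements span `B_t`: they lie in it because `Δ(1) ∈ B ⊗ B_t`, and
`ε_t(x) = 1 ⟵ (ε(· x) ∘ ε'_t)`. Finally `B_t` is `*`-closed.
-/

section StarDual

variable {M : Type*} [AddCommMonoid M] [Module ℂ M] [StarAddMonoid M] [StarModule ℂ M]

def starDual (φ : Module.Dual ℂ M) : Module.Dual ℂ M := (star (WithConv.toConv φ)).ofConv

@[simp] lemma starDual_apply (φ : Module.Dual ℂ M) (x : M) :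
    starDual φ x = star (φ (star x)) :=
  rfl

lemma starDual_involutive : Function.Involutive (starDual (M := M)) := fun φ => by
  ext x; simp

end StarDual

namespace TensorProduct

section Slices

variable {R M N : Type*} [CommSemiring R] [AddCommMonoid M] [Module R M]
  [AddCommMonoid N] [Module R N]

def sliceLeft (φ : Module.Dual R M) : M ⊗[R] N →ₗ[R] N :=
  (TensorProduct.lid R N).toLinearMap ∘ₗ map φ LinearMap.id

def sliceRight (ψ : Module.Dual R N) : M ⊗[R] N →ₗ[R] M :=
  (TensorProduct.rid R M).toLinearMap ∘ₗ map LinearMap.id ψ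

@[simp] lemma sliceLeft_tmul (φ : Module.Dual R M) (m : M) (n : N) :
    sliceLeft φ (m ⊗ₜ[R] n) = φ m • n := by
  simp [sliceLeft]

@[simp] lemma sliceRight_tmul (ψ : Module.Dual R N) (m : M) (n : N) :
    sliceRight ψ (m ⊗ₜ[R] n) = ψ n • m := by
  simp [sliceRight]

lemma apply_sliceLeft (φ : Module.Dual R M) (ψ : Module.Dual R N) (t : M ⊗[R] N) :
    ψ (sliceLeft φ t) = TensorProduct.lid R R (map φ ψ t) := by
  induction t with
  | zero => simp
  | tmul m n => simp
  | add t u ht hu => simp [ht, hu]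

lemma apply_sliceRight (φ : Module.Dual R M) (ψ : Module.Dual R N) (t : M ⊗[R] N) :
    φ (sliceRight ψ t) = TensorProduct.lid R R (map φ ψ t) := by
  induction t with
  | zero => simp
  | tmul m n => simp [mul_comm]
  | add t u ht hu => simp [ht, hu]

lemma sliceLeft_map {M' N' : Type*} [AddCommMonoid M'] [Module R M'] [AddCommMonoid N']
    [Module R N'] (φ : Module.Dual R M') (f : M →ₗ[R] M') (g : N →ₗ[R] N') (t : M ⊗[R] N) :
    sliceLeft φ (map f g t) = g (sliceLeft (φ ∘ₗ f) t) := by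
  induction t with
  | zero => simp
  | tmul m n => simp
  | add t u ht hu => simp [ht, hu]

lemma sliceLeft_assoc_symm {P : Type*} [AddCommMonoid P] [Module R P]
    (φ : Module.Dual R M) (ψ : Module.Dual R N) (w : M ⊗[R] (N ⊗[R] P)) :
    sliceLeft ((TensorProduct.lid R R).toLinearMap ∘ₗ map φ ψ)
        ((TensorProduct.assoc R M N P).symm w) = sliceLeft ψ (sliceLeft φ w) := by
  induction w with
  | zero => simp
  | add w v hw hv => simp [hw, hv]
  | tmul m u =>
    induction u with
    | zero => simp
    | add u v hu hv => simp [tmul_add, hu, hv]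
    | tmul n p => simp [smul_smul]

end Slices

section AlgebraSlices

variable {R A : Type*} [CommRing R] [Ring A] [Algebra R A]

lemma sliceLeft_mul_tmul (φ : Module.Dual R A) (t : A ⊗[R] A) (a c : A) :
    sliceLeft φ (t * (a ⊗ₜ[R] c)) = sliceLeft (φ ∘ₗ LinearMap.mulRight R a) t * c := by
  induction t with
  | zero => simp
  | tmul x y => simp
  | add t u ht hu => simp [add_mul, ht, hu]

lemma sliceLeft_tmul_mul (φ : Module.Dual R A) (t : A ⊗[R] A) (a c : A) :
    sliceLeft φ ((a ⊗ₜ[R] c) * t) = c * sliceLeft (φ ∘ₗ LinearMap.mulLeft R a) t := by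
  induction t with
  | zero => simp
  | tmul x y => simp
  | add t u ht hu => simp [mul_add, ht, hu]

lemma sliceRight_mul_tmul (ψ : Module.Dual R A) (t : A ⊗[R] A) (a c : A) :
    sliceRight ψ (t * (a ⊗ₜ[R] c)) = sliceRight (ψ ∘ₗ LinearMap.mulRight R c) t * a := by
  induction t with
  | zero => simp
  | tmul x y => simp
  | add t u ht hu => simp [add_mul, ht, hu]

lemma sliceRight_tmul_mul (ψ : Module.Dual R A) (t : A ⊗[R] A) (a c : A) :
    sliceRight ψ ((a ⊗ₜ[R] c) * t) = a * sliceRight (ψ ∘ₗ LinearMap.mulLeft R c) t := by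
  induction t with
  | zero => simp
  | tmul x y => simp
  | add t u ht hu => simp [mul_add, ht, hu]

lemma map_sliceRight_mul_assoc_symm (φ : Module.Dual R A) (s t : A ⊗[R] A) :
    map (sliceRight φ) LinearMap.id
        ((t ⊗ₜ[R] (1 : A)) * (TensorProduct.assoc R A A A).symm ((1 : A) ⊗ₜ[R] s)) =
      map LinearMap.id (sliceLeft φ ∘ₗ LinearMap.mulRight R s ∘ₗ (mk R A A).flip 1) t := by
  induction t with
  | zero => simp
  | add t u ht hu => simp [add_tmul, add_mul, ht, hu]
  | tmul a b =>
    simp only [map_tmul, LinearMap.id_apply, LinearMap.comp_apply, LinearMap.mulRight_apply,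
      LinearMap.flip_apply, mk_apply]
    induction s with
    | zero => simp
    | add s u hs hu => simp only [tmul_add, map_add, mul_add, hs, hu]
    | tmul c d => simp [smul_tmul]

lemma map_sliceLeft_assoc_mul (φ : Module.Dual R A) (s w : A ⊗[R] A) :
    map LinearMap.id (sliceLeft φ)
        ((TensorProduct.assoc R A A A) (s ⊗ₜ[R] (1 : A)) * ((1 : A) ⊗ₜ[R] w)) =
      map (sliceRight φ ∘ₗ LinearMap.mulLeft R s ∘ₗ mk R A A 1) LinearMap.id w := by
  induction w with
  | zero => simp
  | add w u hw hu => simp [tmul_add, mul_add, hw, hu]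
  | tmul a b =>
    simp only [map_tmul, LinearMap.id_apply, LinearMap.comp_apply, LinearMap.mulLeft_apply,
      mk_apply]
    induction s with
    | zero => simp
    | add s u hs hu => simp only [add_tmul, map_add, add_mul, hs, hu]
    | tmul c d => simp [smul_tmul]

lemma assoc_mul (x y : (A ⊗[R] A) ⊗[R] A) :
    TensorProduct.assoc R A A A (x * y) =
      TensorProduct.assoc R A A A x * TensorProduct.assoc R A A A y :=
  map_mul (Algebra.TensorProduct.assoc R R R A A A) x y

lemma map_id_mul_one_tmul {C : Type*} [Ring C] [Algebra R C] (f : A →ₗ[R] C)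
    (hf : ∀ a b, f (a * b) = f a * f b) (s : A ⊗[R] A) (x : A) :
    map LinearMap.id f (s * ((1 : A) ⊗ₜ[R] x)) = map LinearMap.id f s * ((1 : A) ⊗ₜ[R] f x) := by
  induction s with
  | zero => simp
  | tmul a b => simp [hf]
  | add s u hs hu => simp [add_mul, hs, hu]

end AlgebraSlices

section StarSlices

variable {M N : Type*} [AddCommMonoid M] [Module ℂ M] [StarAddMonoid M] [StarModule ℂ M]
  [AddCommMonoid N] [Module ℂ N] [StarAddMonoid N] [StarModule ℂ N]

lemma star_sliceLeft (φ : Module.Dual ℂ M) (t : M ⊗[ℂ] N) :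
    star (sliceLeft φ t) = sliceLeft (starDual φ) (star t) := by
  induction t with
  | zero => simp
  | tmul m n => simp [star_smul]
  | add t u ht hu => simp [ht, hu]

lemma star_sliceRight (ψ : Module.Dual ℂ N) (t : M ⊗[ℂ] N) :
    star (sliceRight ψ t) = sliceRight (starDual ψ) (star t) := by
  induction t with
  | zero => simp
  | tmul m n => simp [star_smul]
  | add t u ht hu => simp [ht, hu]

lemma star_map_apply (f f' : M →ₗ[ℂ] M) (g g' : N →ₗ[ℂ] N)
    (hf : ∀ x, f' (star x) = star (f x)) (hg : ∀ x, g' (star x) = star (g x)) (t : M ⊗[ℂ] N) :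
    star (map f g t) = map f' g' (star t) := by
  induction t with
  | zero => simp
  | tmul m n => simp [hf, hg]
  | add t u ht hu => simp [ht, hu]

end StarSlices

end TensorProduct

lemma tensorStar_eq_star {M N : Type} [AddCommGroup M] [Module ℂ M] [Module.Finite ℂ M]
    [Module.Free ℂ M] [StarAddMonoid M] [StarModule ℂ M] [AddCommGroup N] [Module ℂ N]
    [Module.Finite ℂ N] [Module.Free ℂ N] [StarAddMonoid N] [StarModule ℂ N] (t : M ⊗[ℂ] N) :
    tensorStar M N t = star t := by
  let b := (Module.Free.chooseBasis ℂ M).tensorProduct (Module.Free.chooseBasis ℂ N)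
  conv_rhs => rw [← b.sum_repr t]
  simp only [tensorStar, star_sum, star_smul, b]
  refine Finset.sum_congr rfl fun p _ => ?_
  rw [Module.Basis.tensorProduct_apply, star_tmul]
  rfl

namespace WHA

variable {B : Type} [NormedRing B] [StarRing B] [CStarRing B] [NormedAlgebra ℂ B]
  [StarModule ℂ B] [FiniteDimensional ℂ B] (W : WHA B)

open LinearMap (mulLeft mulRight)

lemma arrL_eq_sliceLeft (b : B) (φ : Module.Dual ℂ B) : W.arrL b φ = sliceLeft φ (W.Δ b) :=
  rfl

lemma arrL_counit (b : B) : W.arrL b W.ε = b := W.counit_left b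

lemma sliceLeft_counit_comul (b : B) : sliceLeft W.ε (W.Δ b) = b := W.counit_left b

lemma sliceRight_counit_comul (b : B) : sliceRight W.ε (W.Δ b) = b := W.counit_right b

lemma sliceLeft_counit_comp_comul : sliceLeft W.ε ∘ₗ W.Δ = LinearMap.id :=
  LinearMap.ext W.counit_left

lemma sliceRight_counit_comp_comul : sliceRight W.ε ∘ₗ W.Δ = LinearMap.id :=
  LinearMap.ext W.counit_right

lemma comul_star_eq_star (b : B) : W.Δ (star b) = star (W.Δ b) := by
  rw [W.comul_star, tensorStar_eq_star]

lemma star_comul_one : star (W.Δ 1) = W.Δ 1 := by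
  rw [← comul_star_eq_star, star_one]

-- `starDual ε` is again a right counit, and a right counit agrees with the left one.
lemma counit_star (x : B) : W.ε (star x) = star (W.ε x) := by
  have hright : ∀ y, sliceRight (starDual W.ε) (W.Δ y) = y := fun y => by
    rw [← star_star y, comul_star_eq_star, ← star_sliceRight, sliceRight_counit_comul]
  have h : ∀ y, W.ε y = starDual W.ε y := fun y => by
    conv_lhs => rw [← hright y]
    rw [apply_sliceRight, ← apply_sliceLeft, sliceLeft_counit_comul]
  simpa using h (star x)

def εtₗ : B →ₗ[ℂ] B := sliceLeft W.ε ∘ₗ mulLeft ℂ (W.Δ 1) ∘ₗ (TensorProduct.mk ℂ B B).flip 1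

def εsₗ : B →ₗ[ℂ] B := sliceRight W.ε ∘ₗ mulRight ℂ (W.Δ 1) ∘ₗ TensorProduct.mk ℂ B B 1

/- `εtOp`, `εsOp` are the counital maps `ε'_t`, `ε'_s` of the opposite algebra. Conjugation by
`star` exchanges them with `εt`, `εs` (`εt_star`, `εs_star`). -/
def εtOp : B →ₗ[ℂ] B := sliceLeft W.ε ∘ₗ mulRight ℂ (W.Δ 1) ∘ₗ (TensorProduct.mk ℂ B B).flip 1

def εsOp : B →ₗ[ℂ] B := sliceRight W.ε ∘ₗ mulLeft ℂ (W.Δ 1) ∘ₗ TensorProduct.mk ℂ B B 1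

lemma εtₗ_apply (y : B) : W.εtₗ y = W.εt y := rfl

lemma εsₗ_apply (y : B) : W.εsₗ y = W.εs y := rfl

lemma εt_eq_arrL (y : B) : W.εt y = W.arrL 1 (W.ε ∘ₗ mulRight ℂ y) := by
  rw [← εtₗ_apply]
  simp [εtₗ, sliceLeft_mul_tmul, arrL_eq_sliceLeft]

lemma εtOp_eq_arrL (y : B) : W.εtOp y = W.arrL 1 (W.ε ∘ₗ mulLeft ℂ y) := by
  simp [εtOp, sliceLeft_tmul_mul, arrL_eq_sliceLeft]

lemma εs_eq_sliceRight (y : B) : W.εs y = sliceRight (W.ε ∘ₗ mulLeft ℂ y) (W.Δ 1) := by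
  rw [← εsₗ_apply]
  simp [εsₗ, sliceRight_tmul_mul]

lemma εsOp_eq_sliceRight (y : B) : W.εsOp y = sliceRight (W.ε ∘ₗ mulRight ℂ y) (W.Δ 1) := by
  simp [εsOp, sliceRight_mul_tmul]

lemma starDual_counit_comp_mulLeft (y : B) :
    starDual (W.ε ∘ₗ mulLeft ℂ y) = W.ε ∘ₗ mulRight ℂ (star y) := by
  ext x
  simp [← counit_star]

lemma starDual_counit_comp_mulRight (y : B) :
    starDual (W.ε ∘ₗ mulRight ℂ y) = W.ε ∘ₗ mulLeft ℂ (star y) := by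
  ext x
  simp [← counit_star]

lemma εt_star (y : B) : W.εt (star y) = star (W.εtOp y) := by
  rw [εt_eq_arrL, εtOp_eq_arrL, arrL_eq_sliceLeft, arrL_eq_sliceLeft, star_sliceLeft,
    star_comul_one, starDual_counit_comp_mulLeft]

lemma εs_star (y : B) : W.εs (star y) = star (W.εsOp y) := by
  rw [εs_eq_sliceRight, εsOp_eq_sliceRight, star_sliceRight, star_comul_one,
    starDual_counit_comp_mulRight]

lemma counit_εtOp_mul (y x : B) : W.ε (W.εtOp y * x) = W.ε (y * x) := by
  have h := W.weak_counit y 1 x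
  rw [mul_one] at h
  rw [εtOp_eq_arrL, arrL_eq_sliceLeft, ← LinearMap.mulRight_apply (R := ℂ),
    ← LinearMap.comp_apply, apply_sliceLeft, h]

lemma counit_mul_εt (y x : B) : W.ε (y * W.εt x) = W.ε (y * x) := by
  rw [← star_star x, εt_star, ← star_star y, ← star_mul, counit_star, counit_εtOp_mul,
    ← counit_star, star_mul]

lemma counit_εs_mul (y x : B) : W.ε (W.εs y * x) = W.ε (y * x) := by
  rw [εs_eq_sliceRight, ← LinearMap.mulRight_apply (R := ℂ), ← LinearMap.comp_apply,
    apply_sliceRight, ← apply_sliceLeft, LinearMap.comp_apply, LinearMap.mulLeft_apply,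
    ← arrL_eq_sliceLeft, ← εt_eq_arrL, counit_mul_εt]

lemma εtOp_comp_εs : W.εtOp ∘ₗ W.εsₗ = W.εtOp := by
  ext y
  have h : W.ε ∘ₗ mulLeft ℂ (W.εs y) = W.ε ∘ₗ mulLeft ℂ y := by
    ext x; simp [counit_εs_mul]
  rw [LinearMap.comp_apply, εsₗ_apply, εtOp_eq_arrL, εtOp_eq_arrL, h]

lemma map_id_εtOp_comul_one : map LinearMap.id W.εtOp (W.Δ 1) = W.Δ 1 := by
  rw [εtOp, ← map_sliceRight_mul_assoc_symm, ← W.weak_comul_one, map_map, LinearMap.id_comp,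
    sliceRight_counit_comp_comul, map_id, LinearMap.id_apply]

lemma map_εsOp_id_comul (x : B) : map W.εsOp LinearMap.id (W.Δ x) = W.Δ 1 * (1 ⊗ₜ x) := by
  let G : B ⊗[ℂ] (B ⊗[ℂ] B) →ₗ[ℂ] B ⊗[ℂ] B := map LinearMap.id (sliceLeft W.ε)
  calc map W.εsOp LinearMap.id (W.Δ x)
      = map W.εsOp LinearMap.id (W.Δ 1 * W.Δ x) := by rw [← W.comul_mul, one_mul]
    _ = G (TensorProduct.assoc ℂ B B B (W.Δ 1 ⊗ₜ 1) * (1 ⊗ₜ (W.Δ 1 * W.Δ x))) :=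
        (map_sliceLeft_assoc_mul _ _ _).symm
    _ = G (TensorProduct.assoc ℂ B B B
          ((W.Δ 1 ⊗ₜ 1) * (TensorProduct.assoc ℂ B B B).symm (1 ⊗ₜ W.Δ 1)) * (1 ⊗ₜ W.Δ x)) := by
        rw [TensorProduct.assoc_mul, LinearEquiv.apply_symm_apply, mul_assoc,
          Algebra.TensorProduct.tmul_mul_tmul, one_mul]
    _ = G (map LinearMap.id W.Δ (W.Δ 1 * (1 ⊗ₜ x))) := by
        rw [← W.weak_comul_one, W.coassoc, map_id_mul_one_tmul _ W.comul_mul]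
    _ = W.Δ 1 * (1 ⊗ₜ x) := by
        rw [map_map, LinearMap.id_comp, sliceLeft_counit_comp_comul, map_id, LinearMap.id_apply]

lemma map_id_εt_comul_one : map LinearMap.id W.εtₗ (W.Δ 1) = W.Δ 1 := by
  rw [← star_comul_one, ← star_map_apply LinearMap.id LinearMap.id W.εtOp, map_id_εtOp_comul_one]
  · simp
  · intro y; rw [εtₗ_apply, εt_star]

lemma map_εs_id_comul (x : B) : map W.εsₗ LinearMap.id (W.Δ x) = (1 ⊗ₜ x) * W.Δ 1 := by
  rw [← star_star x, comul_star_eq_star, ← star_map_apply W.εsOp _ LinearMap.id,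
    map_εsOp_id_comul, star_mul, star_comul_one, star_tmul, star_one]
  · intro y; rw [εsₗ_apply, εs_star]
  · simp

lemma arrL_comp_εs (x : B) (ψ : Module.Dual ℂ B) : W.arrL x (ψ ∘ₗ W.εsₗ) = x * W.arrL 1 ψ := by
  rw [arrL_eq_sliceLeft, ← LinearMap.id_apply (R := ℂ) (sliceLeft _ _), ← sliceLeft_map,
    map_εs_id_comul, sliceLeft_tmul_mul, LinearMap.mulLeft_one, LinearMap.comp_id,
    arrL_eq_sliceLeft]

lemma arrL_comp_εtOp (x : B) (χ : Module.Dual ℂ B) :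
    W.arrL x (χ ∘ₗ W.εtOp) = x * W.arrL 1 (χ ∘ₗ W.εtOp) := by
  simpa only [LinearMap.comp_assoc, εtOp_comp_εs] using W.arrL_comp_εs x (χ ∘ₗ W.εtOp)

lemma arrL_one_mem_Bt (φ : Module.Dual ℂ B) : W.arrL 1 φ ∈ W.Bt := by
  rw [arrL_eq_sliceLeft, ← map_id_εt_comul_one, sliceLeft_map, LinearMap.comp_id, εtₗ_apply]
  exact Submodule.subset_span ⟨_, rfl⟩

lemma star_mem_Bt {z : B} (hz : z ∈ W.Bt) : star z ∈ W.Bt := by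
  induction hz using Submodule.span_induction with
  | mem z hz =>
    obtain ⟨y, rfl⟩ := hz
    rw [← star_star y, εt_star, star_star, εtOp_eq_arrL]
    exact W.arrL_one_mem_Bt _
  | zero => simp
  | add x y _ _ hx hy => simpa using W.Bt.add_mem hx hy
  | smul a x _ hx => simpa using W.Bt.smul_mem (star a) hx

lemma star_arrL (b : B) (φ : Module.Dual ℂ B) :
    star (W.arrL b φ) = W.arrL (star b) (starDual φ) := by
  rw [arrL_eq_sliceLeft, star_sliceLeft, ← comul_star_eq_star, arrL_eq_sliceLeft]

lemma mulHat_apply (φ ψ : Module.Dual ℂ B) (b : B) :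
    W.mulHat φ ψ b = TensorProduct.lid ℂ ℂ (map φ ψ (W.Δ b)) :=
  rfl

lemma mulHat_counit_left (φ : Module.Dual ℂ B) : W.mulHat W.ε φ = φ := by
  ext b; rw [mulHat_apply, ← apply_sliceLeft, sliceLeft_counit_comul]

lemma mulHat_counit_right (φ : Module.Dual ℂ B) : W.mulHat φ W.ε = φ := by
  ext b; rw [mulHat_apply, ← apply_sliceRight, sliceRight_counit_comul]

lemma dualDistrib_comulHat (φ : Module.Dual ℂ B) :
    dualDistrib ℂ B B (W.comulHat φ) = φ ∘ₗ LinearMap.mul' ℂ B :=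
  (dualDistribEquiv ℂ B B).apply_symm_apply _

lemma εtHat_eq (χ : Module.Dual ℂ B) : W.εtHat χ = χ ∘ₗ W.εtₗ := by
  ext b
  have h : ∀ u : Module.Dual ℂ B ⊗[ℂ] Module.Dual ℂ B,
      sliceLeft counitHat (map (W.mulHat.flip χ) (W.mulHat.flip W.ε) u) b =
        dualDistrib ℂ B B u (sliceRight χ (W.Δ 1) ⊗ₜ b) := fun u => by
    induction u with
    | zero => simp
    | tmul α β => simp [counitHat, mulHat_counit_right, mulHat_apply, ← apply_sliceRight]
    | add u v hu hv => simp [hu, hv]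
  change (sliceLeft counitHat _ : Module.Dual ℂ B) b = _
  rw [h, dualDistrib_comulHat, LinearMap.comp_apply, LinearMap.mul'_apply, LinearMap.comp_apply,
    εtₗ_apply, εt_eq_arrL, arrL_eq_sliceLeft, apply_sliceLeft, ← apply_sliceRight]
  rfl

lemma εsHat_eq (ψ : Module.Dual ℂ B) : W.εsHat ψ = ψ ∘ₗ W.εsₗ := by
  ext b
  have h : ∀ u : Module.Dual ℂ B ⊗[ℂ] Module.Dual ℂ B,
      sliceRight counitHat (map (W.mulHat W.ε) (W.mulHat ψ) u) b =
        dualDistrib ℂ B B u (b ⊗ₜ sliceLeft ψ (W.Δ 1)) := fun u => by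
    induction u with
    | zero => simp
    | tmul α β => simp [counitHat, mulHat_counit_left, mulHat_apply, ← apply_sliceLeft, mul_comm]
    | add u v hu hv => simp [hu, hv]
  change (sliceRight counitHat _ : Module.Dual ℂ B) b = _
  rw [h, dualDistrib_comulHat, LinearMap.comp_apply, LinearMap.mul'_apply, LinearMap.comp_apply,
    εsₗ_apply, εs_eq_sliceRight, apply_sliceRight, ← apply_sliceLeft]
  rfl

lemma arrL_mulHat (b : B) (φ ψ : Module.Dual ℂ B) :
    W.arrL b (W.mulHat φ ψ) = W.arrL (W.arrL b φ) ψ := by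
  have hcoassoc : map W.Δ LinearMap.id (W.Δ b) =
      (TensorProduct.assoc ℂ B B B).symm (map LinearMap.id W.Δ (W.Δ b)) := by
    rw [← W.coassoc, LinearEquiv.symm_apply_apply]
  calc W.arrL b (W.mulHat φ ψ)
      = sliceLeft ((TensorProduct.lid ℂ ℂ).toLinearMap ∘ₗ map φ ψ)
          (map W.Δ LinearMap.id (W.Δ b)) := by
        rw [sliceLeft_map, LinearMap.id_apply]; rfl
    _ = sliceLeft ψ (sliceLeft φ (map LinearMap.id W.Δ (W.Δ b))) := by
        rw [hcoassoc, sliceLeft_assoc_symm]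
    _ = W.arrL (W.arrL b φ) ψ := by
        rw [sliceLeft_map, LinearMap.comp_id]; rfl

def arrLₗ (b : B) : Module.Dual ℂ B →ₗ[ℂ] B where
  toFun φ := W.arrL b φ
  map_add' φ ψ := by simp [arrL, map_add_left]
  map_smul' c φ := by simp [arrL, map_smul_left]

def arrLEqLocus (b : B) : Submodule ℂ (Module.Dual ℂ B) :=
  LinearMap.eqLocus (W.arrLₗ b) (mulLeft ℂ b ∘ₗ W.arrLₗ 1)

lemma mem_arrLEqLocus {b : B} {φ : Module.Dual ℂ B} :
    φ ∈ W.arrLEqLocus b ↔ W.arrL b φ = b * W.arrL 1 φ :=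
  Iff.rfl

lemma span_εsHat_le_arrLEqLocus (x : B) :
    Submodule.span ℂ (Set.range W.εsHat) ≤ W.arrLEqLocus x :=
  Submodule.span_le.2 <| Set.range_subset_iff.2 fun ψ => by
    rw [SetLike.mem_coe, mem_arrLEqLocus, εsHat_eq, arrL_comp_εs, arrL_comp_εs, one_mul]

lemma minHat_le_arrLEqLocus_iff (b : B) :
    W.minHat ≤ W.arrLEqLocus b ↔ ∀ χ : Module.Dual ℂ B, χ ∘ₗ W.εtₗ ∈ W.arrLEqLocus b := by
  constructor
  · intro h χ
    have hmem : W.mulHat (W.εtHat χ) (W.εsHat W.ε) ∈ W.minHat :=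
      Submodule.subset_span ⟨_, Submodule.subset_span ⟨χ, rfl⟩, _,
        Submodule.subset_span ⟨W.ε, rfl⟩, rfl⟩
    have := W.mem_arrLEqLocus.1 (h hmem)
    rwa [arrL_mulHat, arrL_mulHat, εsHat_eq, arrL_comp_εs, arrL_comp_εs, arrL_counit, mul_one,
      mul_one, εtHat_eq] at this
  · intro h
    have ht : Submodule.span ℂ (Set.range W.εtHat) ≤ W.arrLEqLocus b :=
      Submodule.span_le.2 <| Set.range_subset_iff.2 fun χ => by rw [εtHat_eq]; exact h χ
    refine Submodule.span_le.2 ?_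
    rintro _ ⟨u, hu, v, hv, rfl⟩
    have hv' x := W.mem_arrLEqLocus.1 (W.span_εsHat_le_arrLEqLocus x hv)
    rw [SetLike.mem_coe, mem_arrLEqLocus, arrL_mulHat, arrL_mulHat, hv' (W.arrL b u),
      hv' (W.arrL 1 u), W.mem_arrLEqLocus.1 (ht hu), mul_assoc]

lemma comp_εt_mem_arrLEqLocus_iff (b : B) (χ : Module.Dual ℂ B) :
    χ ∘ₗ W.εtₗ ∈ W.arrLEqLocus b ↔
      star b * W.arrL 1 (starDual χ ∘ₗ W.εtOp) = W.arrL 1 (starDual χ ∘ₗ W.εtOp) * star b := by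
  have hdual : starDual (χ ∘ₗ W.εtₗ) = starDual χ ∘ₗ W.εtOp := by
    ext y; simp [εtₗ_apply, εt_star]
  rw [mem_arrLEqLocus, ← star_inj, star_arrL, star_mul, star_arrL, star_one, hdual,
    arrL_comp_εtOp]

lemma forall_commute_arrL_comp_εtOp_iff (c : B) :
    (∀ χ : Module.Dual ℂ B, c * W.arrL 1 (χ ∘ₗ W.εtOp) = W.arrL 1 (χ ∘ₗ W.εtOp) * c) ↔
      ∀ z ∈ W.Bt, c * z = z * c := by
  refine ⟨fun h z hz => ?_, fun h χ => h _ (W.arrL_one_mem_Bt _)⟩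
  have hεt : ∀ x, W.εt x = W.arrL 1 ((W.ε ∘ₗ mulRight ℂ x) ∘ₗ W.εtOp) := fun x => by
    rw [εt_eq_arrL]
    congr 1
    ext y
    simp [counit_εtOp_mul]
  have hle : W.Bt ≤ Subalgebra.toSubmodule (Subalgebra.centralizer ℂ {c}) :=
    Submodule.span_le.2 <| Set.range_subset_iff.2 fun x => by
      simpa [Subalgebra.mem_centralizer_iff, Set.mem_centralizer_iff, hεt] using
        h (W.ε ∘ₗ mulRight ℂ x)
  simpa [Subalgebra.mem_centralizer_iff] using hle hz

lemma forall_commute_star_iff (b : B) :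
    (∀ z ∈ W.Bt, star b * z = z * star b) ↔ ∀ z ∈ W.Bt, b * z = z * b := by
  have key : ∀ a : B, (∀ z ∈ W.Bt, a * z = z * a) → ∀ z ∈ W.Bt, star a * z = z * star a := by
    intro a ha z hz
    have := ha _ (W.star_mem_Bt hz)
    rw [← star_star z, ← star_mul, ← this, star_mul]
  exact ⟨fun h => by simpa using key _ h, key b⟩

end WHA

theorem mem_max_quotient_coideal_iff_commutes_Bt {B : Type} [NormedRing B] [StarRing B]
    [CStarRing B] [NormedAlgebra ℂ B] [StarModule ℂ B] [FiniteDimensional ℂ B]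
    (W : WHA B) (b : B) :
    (∀ φ ∈ W.minHat, W.arrL b φ = b * W.arrL 1 φ) ↔ (∀ z ∈ W.Bt, b * z = z * b) := by
  change W.minHat ≤ W.arrLEqLocus b ↔ _
  rw [W.minHat_le_arrLEqLocus_iff, ← W.forall_commute_star_iff,
    ← W.forall_commute_arrL_comp_εtOp_iff]
  conv_rhs => rw [starDual_involutive.surjective.forall]
  exact forall_congr' (W.comp_εt_mem_arrLEqLocus_iff b)
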